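/- Let K be a field and A = K[x, x⁻¹] the Laurent polynomial algebra over K. Let V = span_K{xᵏ : k ≥ 0} and W = span_K{xᵏ : k < 0}, so A = V ⊕ W, and let F be the K-linear endomorphism of A with F = id on V and F = −id on W. Then the operator r_{x⁻¹} ∘ [F, r_x] has finite rank and Tr(r_{x⁻¹} ∘ [F, r_x]) = 2 (as an element of K). In particular, over a field of characteristic ≠ 2 the associated cyclic cocycle is nontrivial. -/

import Mathlib

open LaurentPolynomial

/-- The trace of a finite-rank endomorphism `T`: the trace of the restriction of `T`
to its range. -/
noncomputable def trOf {K M : Type*} [Field K] [AddCommGroup M] [Module K M]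
    (T : M →ₗ[K] M) : K :=
  LinearMap.trace K (LinearMap.range T)
    (T.restrict (fun x _ => LinearMap.mem_range_self T x))

noncomputable def projM1 (K : Type*) [Field K] :
    LaurentPolynomial K →ₗ[K] LaurentPolynomial K where
  toFun p := AddMonoidAlgebra.single (-1 : ℤ) (p.coeff (-1))
  map_add' p q := by
    show AddMonoidAlgebra.single (-1 : ℤ) ((p + q).coeff (-1)) =
      AddMonoidAlgebra.single (-1 : ℤ) (p.coeff (-1)) + AddMonoidAlgebra.single (-1 : ℤ) (q.coeff (-1))
    rw [AddMonoidAlgebra.coeff_add, Finsupp.add_apply, AddMonoidAlgebra.single_add]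
  map_smul' c p := by
    show AddMonoidAlgebra.single (-1 : ℤ) ((c • p).coeff (-1)) =
      c • AddMonoidAlgebra.single (-1 : ℤ) (p.coeff (-1))
    rw [AddMonoidAlgebra.coeff_smul_apply, AddMonoidAlgebra.smul_single]

lemma projM1_single (K : Type*) [Field K] (a : ℤ) (b : K) :
    projM1 K (AddMonoidAlgebra.single a b) = if a = -1 then AddMonoidAlgebra.single (-1 : ℤ) b else 0 := by
  show AddMonoidAlgebra.single (-1 : ℤ) ((AddMonoidAlgebra.single a b : LaurentPolynomial K).coeff (-1)) = _
  rw [AddMonoidAlgebra.coeff_single, Finsupp.single_apply]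
  split_ifs with h <;> simp

lemma projM1_T (K : Type*) [Field K] (a : ℤ) :
    projM1 K (T a) = if a = -1 then T (-1) else 0 := by
  rw [T, projM1_single]; rfl

lemma projM1_smul_T (K : Type*) [Field K] (p : LaurentPolynomial K) :
    projM1 K p = p.coeff (-1) • T (-1) := by
  show AddMonoidAlgebra.single (-1 : ℤ) (p.coeff (-1)) =
    p.coeff (-1) • (AddMonoidAlgebra.single (-1 : ℤ) (1 : K) : LaurentPolynomial K)
  rw [AddMonoidAlgebra.smul_single, smul_eq_mul, mul_one]

lemma trOf_zero {K M : Type*} [Field K] [AddCommGroup M] [Module K M] :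
    trOf (0 : M →ₗ[K] M) = 0 := by
  unfold trOf
  have h : ((0 : M →ₗ[K] M).restrict
      (fun x _ => LinearMap.mem_range_self (0 : M →ₗ[K] M) x) :
      LinearMap.range (0 : M →ₗ[K] M) →ₗ[K] LinearMap.range (0 : M →ₗ[K] M)) = 0 := by
    ext x
    simp [LinearMap.restrict_apply]
  rw [h, map_zero]

/-- In the Laurent polynomial algebra `A = K[x, x⁻¹]`, with
`V = span{xᵏ : k ≥ 0}`, `W = span{xᵏ : k < 0}` and `F` the associated symmetry,
the operator `r_{x⁻¹} ∘ [F, r_x]` has finite rank and its trace is `2`. -/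
theorem laurent_winding_number
    (K : Type*) [Field K]
    (V W : Submodule K (LaurentPolynomial K))
    (hVdef : V = Submodule.span K {p | ∃ k : ℤ, 0 ≤ k ∧ p = LaurentPolynomial.T k})
    (hWdef : W = Submodule.span K {p | ∃ k : ℤ, k < 0 ∧ p = LaurentPolynomial.T k})
    (F : LaurentPolynomial K →ₗ[K] LaurentPolynomial K)
    (hFV : ∀ v ∈ V, F v = v) (hFW : ∀ w ∈ W, F w = -w) :
    FiniteDimensional K (LinearMap.range
      (LinearMap.mulRight K (LaurentPolynomial.T (-1)) ∘ₗ
        (F ∘ₗ LinearMap.mulRight K (LaurentPolynomial.T 1) -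
         LinearMap.mulRight K (LaurentPolynomial.T 1) ∘ₗ F))) ∧
    trOf (LinearMap.mulRight K (LaurentPolynomial.T (-1)) ∘ₗ
        (F ∘ₗ LinearMap.mulRight K (LaurentPolynomial.T 1) -
         LinearMap.mulRight K (LaurentPolynomial.T 1) ∘ₗ F)) = 2 := by
  subst hVdef hWdef
  set G : LaurentPolynomial K →ₗ[K] LaurentPolynomial K :=
    LinearMap.mulRight K (LaurentPolynomial.T (-1)) ∘ₗ
      (F ∘ₗ LinearMap.mulRight K (LaurentPolynomial.T 1) -
       LinearMap.mulRight K (LaurentPolynomial.T 1) ∘ₗ F) with hGdef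
  have hFpos : ∀ k : ℤ, 0 ≤ k → F (T k) = T k := fun k hk =>
    hFV _ (Submodule.subset_span ⟨k, hk, rfl⟩)
  have hFneg : ∀ k : ℤ, k < 0 → F (T k) = -T k := fun k hk =>
    hFW _ (Submodule.subset_span ⟨k, hk, rfl⟩)
  have hGT : ∀ a : ℤ, G (T a) = (2 : K) • projM1 K (T a) := by
    intro a
    rw [hGdef]
    simp only [LinearMap.comp_apply, LinearMap.sub_apply, LinearMap.mulRight_apply]
    rw [← T_add, projM1_T]
    rcases lt_trichotomy a (-1) with h | rfl | h
    · rw [hFneg a (by omega), hFneg (a + 1) (by omega), if_neg (by omega)]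
      rw [neg_mul, sub_neg_eq_add, ← T_add, neg_add_cancel, zero_mul, smul_zero]
    · rw [hFneg (-1) (by norm_num), show (-1 : ℤ) + 1 = 0 by norm_num,
        hFpos 0 le_rfl, if_pos rfl]
      rw [neg_mul, sub_neg_eq_add, ← T_add, show (-1 : ℤ) + 1 = 0 by norm_num]
      rw [← two_smul K (T 0), smul_mul_assoc, ← T_add,
        show (0 : ℤ) + -1 = -1 from by norm_num]
    · rw [hFpos a (by omega), hFpos (a + 1) (by omega), if_neg (by omega)]
      rw [← T_add, sub_self, zero_mul, smul_zero]
  have key : ∀ p, G p = (2 : K) • projM1 K p := by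
    intro p
    induction p using LaurentPolynomial.induction_on' with
    | add p q hp hq => rw [map_add, map_add, hp, hq, smul_add]
    | C_mul_T n a =>
      rw [C_eq_algebraMap, ← Algebra.smul_def, map_smul, map_smul, hGT n, smul_comm]
  have hPP : ∀ p, projM1 K (projM1 K p) = projM1 K p := by
    intro p
    rw [show projM1 K p = AddMonoidAlgebra.single (-1 : ℤ) (p.coeff (-1)) from rfl,
      projM1_single, if_pos rfl]
  by_cases h2 : (2 : K) = 0
  · have hG0 : G = 0 := by
      apply LinearMap.ext; intro p; rw [key, h2, zero_smul]; rfl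
    constructor
    · rw [hG0, LinearMap.range_zero]
      infer_instance
    · rw [hG0, trOf_zero, ← h2]
  · have hy : (T (-1) : LaurentPolynomial K) ≠ 0 := by
      rw [T]
      intro h
      exact one_ne_zero (AddMonoidAlgebra.single_eq_zero.mp h)
    have hrange : LinearMap.range G = Submodule.span K {T (-1)} := by
      apply le_antisymm
      · rintro _ ⟨p, rfl⟩
        rw [key, projM1_smul_T]
        exact Submodule.smul_mem _ _ (Submodule.smul_mem _ _
          (Submodule.mem_span_singleton_self _))
      · rw [Submodule.span_le, Set.singleton_subset_iff]
        refine ⟨(2 : K)⁻¹ • T (-1), ?_⟩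
        rw [map_smul, hGT, projM1_T, if_pos rfl, smul_smul, inv_mul_cancel₀ h2, one_smul]
    have hfin : FiniteDimensional K (LinearMap.range G) := by
      rw [hrange]
      exact FiniteDimensional.span_of_finite K (Set.finite_singleton _)
    refine ⟨hfin, ?_⟩
    have hGG : ∀ z ∈ LinearMap.range G, G z = (2 : K) • z := by
      rintro _ ⟨p, rfl⟩
      rw [key p, map_smul, key (projM1 K p), hPP]
    have hres : G.restrict (fun x _ => LinearMap.mem_range_self G x) =
        (2 : K) • LinearMap.id := by
      apply LinearMap.ext
      intro x
      apply Subtype.ext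
      show G x.1 = (2 : K) • x.1
      exact hGG x.1 x.2
    unfold trOf
    rw [hres, map_smul, LinearMap.trace_id]
    have hfr : Module.finrank K (LinearMap.range G) = 1 := by
      rw [hrange]
      exact finrank_span_singleton hy
    rw [hfr]
    norm_num
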